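/- arXiv:0708.1675 — 2 statements merged into one kernel-verified Lean document; each statement's English description precedes it below -/
import Mathlib

section
/- Every element π of the alternating subgroup B_n^+ of the hyperoctahedral group has a unique presentation π = γ_n^{k_n} γ_{n−1}^{k_{n−1}} ⋯ γ_1^{k_1} with 0 ≤ k_n < n and 0 ≤ k_i < 2i for all 1 ≤ i ≤ n−1. -/
open scoped Classical

/-- `prodPow a k` is the ordered product `a 0 ^ k 0 * a 1 ^ k 1 * ⋯ * a (n-1) ^ k (n-1)`. -/
def prodPow {G : Type*} [Group G] {n : ℕ} (a : Fin n → G) (k : Fin n → ℕ) : G :=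
  (List.ofFn fun i => a i ^ k i).prod

/-- The sequence `a` gives a unique presentation `g = a 0 ^ k 0 * ⋯ * a (n-1) ^ k (n-1)`
with `0 ≤ k i < m i` for every element `g` of the group. -/
def IsUniqueProd {G : Type*} [Group G] {n : ℕ} (a : Fin n → G) (m : Fin n → ℕ) : Prop :=
  ∀ g : G, ∃! k : (i : Fin n) → Fin (m i), g = prodPow a fun i => (k i : ℕ)

/-- A perfect basis: every group element has a unique presentation with each exponent
below the order of the corresponding basis element. -/
def IsPerfectBasis {G : Type*} [Group G] {n : ℕ} (a : Fin n → G) : Prop :=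
  IsUniqueProd a fun i => orderOf (a i)

open scoped Classical in
/-- The flag major index with respect to the sequence `a` with exponent bounds `m`:
the sum of the exponents in the unique presentation (junk value `0` if no unique
presentation exists). -/
noncomputable def fmajSeq {G : Type*} [Group G] {n : ℕ} (a : Fin n → G) (m : Fin n → ℕ)
    (g : G) : ℕ :=
  if h : ∃! k : (i : Fin n) → Fin (m i), g = prodPow a fun i => (k i : ℕ) then
    ∑ i, (h.choose i : ℕ)
  else 0


/-- Encoding of the letters `{±1, …, ±n}`: letter `j` is `(⟨j-1⟩, false)` and `-j` is
`(⟨j-1⟩, true)`. -/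
abbrev SF (n : ℕ) := Fin n × Bool

/-- Negation of a letter. -/
def negx {n : ℕ} (x : SF n) : SF n := (x.1, !x.2)

/-- The hyperoctahedral group `B_n`: permutations `w` of `{±1,…,±n}` with `w(-i) = -w(i)`. -/
def BSet (n : ℕ) : Set (Equiv.Perm (SF n)) := {w | ∀ x, w (negx x) = negx (w x)}

/-- `sadj n j` is the Coxeter generator `s_{j+1}` of `B_n`: the signed permutation
exchanging the values `j+1` and `j+2` (1-indexed) as well as `-(j+1)` and `-(j+2)`. -/
def sadj (n j : ℕ) : Equiv.Perm (SF n) :=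
  if h : j + 1 < n then
    Equiv.swap (⟨j, Nat.lt_of_succ_lt h⟩, false) (⟨j + 1, h⟩, false) *
      Equiv.swap (⟨j, Nat.lt_of_succ_lt h⟩, true) (⟨j + 1, h⟩, true)
  else 1

/-- The generator `s_0 = [-1, 2, …, n]` of `B_n`. -/
def s0B (n : ℕ) : Equiv.Perm (SF n) :=
  if h : 0 < n then Equiv.swap (⟨0, h⟩, false) (⟨0, h⟩, true) else 1

/-- The generator `s_0' = [-2, -1, 3, …, n]` of `D_n`. -/
def s0D (n : ℕ) : Equiv.Perm (SF n) :=
  if h : 2 ≤ n then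
    Equiv.swap (⟨0, by omega⟩, false) (⟨1, by omega⟩, true) *
      Equiv.swap (⟨1, by omega⟩, false) (⟨0, by omega⟩, true)
  else 1

/-- The signed permutation `v_n = [1, 2, …, n-1, -n]`. -/
def muP (n : ℕ) : Equiv.Perm (SF n) :=
  if h : 0 < n then Equiv.swap (⟨n - 1, by omega⟩, false) (⟨n - 1, by omega⟩, true) else 1

/-- `betaP n i = β_i = [-i, 1, 2, …, i-1, i+1, …, n] = s_{i-1} ⋯ s_1 s_0`. -/
def betaP (n i : ℕ) : Equiv.Perm (SF n) :=
  ((List.range (i - 1)).reverse.map (sadj n)).prod * s0B n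

/-- `deltaP n i = δ_i` for `1 ≤ i ≤ n`: for `i ≤ n-1`,
`δ_i = [-i, 1, 2, …, i-1, i+1, …, n-1, -n] = β_i v_n`, while `δ_n = [n, 1, 2, …, n-1]`. -/
def deltaP (n i : ℕ) : Equiv.Perm (SF n) :=
  if i = n then ((List.range (n - 1)).reverse.map (sadj n)).prod
  else betaP n i * muP n

/-- The Coxeter generating set `S = {s_0, s_1, …, s_{n-1}}` of `B_n`. -/
def SgenB (n : ℕ) : Set (Equiv.Perm (SF n)) :=
  {w | w = s0B n ∨ ∃ j : ℕ, j + 1 < n ∧ w = sadj n j}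

/-- The Coxeter generating set `S' = {s_0', s_1, …, s_{n-1}}` of `D_n`. -/
def SgenD (n : ℕ) : Set (Equiv.Perm (SF n)) :=
  {w | w = s0D n ∨ ∃ j : ℕ, j + 1 < n ∧ w = sadj n j}

/-- The word length of `g` with respect to a set `S` of generators: the least `l` such
that `g` is a product of `l` elements of `S`. -/
noncomputable def wordLength {G : Type*} [Group G] (S : Set G) (g : G) : ℕ :=
  sInf {l | ∃ w : List G, (∀ x ∈ w, x ∈ S) ∧ w.length = l ∧ w.prod = g}

/-- The group `D_n` of even signed permutations: elements of `B_n` with an even number of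
negative entries in their window. -/
def DSet (n : ℕ) : Set (Equiv.Perm (SF n)) :=
  {w | w ∈ BSet n ∧ Even (Finset.univ.filter fun i : Fin n => (w (i, false)).2 = true).card}

/-- The alternating subgroup `B_n^+` of `B_n`: elements of even Coxeter length. -/
def BplusSet (n : ℕ) : Set (Equiv.Perm (SF n)) :=
  {w | w ∈ BSet n ∧ Even (wordLength (SgenB n) w)}

/-- The bijection `ψ : D_n → B_n^+`: `ψ(w) = w` if `w ∈ B_n^+`, otherwise `ψ(w) = w·v_n`
(negating the last letter of the window of `w`). -/
noncomputable def psiP (n : ℕ) (w : Equiv.Perm (SF n)) : Equiv.Perm (SF n) :=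
  if w ∈ BplusSet n then w else w * muP n

/-- The generating set `R = {r_1, …, r_{n-1}}` of `B_n^+`, where `r_1 = [2, -1, 3, …, n]`
and `r_i = [-1, 2, …, i-1, i+1, i, i+2, …, n]` for `2 ≤ i ≤ n-1`; here `r_i = s_0 s_i`. -/
def RSet (n : ℕ) : Set (Equiv.Perm (SF n)) :=
  {w | ∃ i : ℕ, 1 ≤ i ∧ i ≤ n - 1 ∧ w = s0B n * sadj n (i - 1)}

/-- The set `R ∪ R⁻¹`. -/
def RRinv (n : ℕ) : Set (Equiv.Perm (SF n)) :=
  RSet n ∪ {w | w⁻¹ ∈ RSet n}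

/-- The basis `b = (β_n, β_{n-1}, …, β_1)` for `B_n`. -/
def bSeq (n : ℕ) : Fin n → Equiv.Perm (SF n) := fun j => betaP n (n - j.val)

/-- The basis `d = (δ_n, δ_{n-1}, …, δ_1)` for `D_n`. -/
def dSeq (n : ℕ) : Fin n → Equiv.Perm (SF n) := fun j => deltaP n (n - j.val)

/-- The basis `c = (γ_n, γ_{n-1}, …, γ_1) = (ψ(δ_n), …, ψ(δ_1))` for `B_n^+`. -/
noncomputable def cSeq (n : ℕ) : Fin n → Equiv.Perm (SF n) :=
  fun j => psiP n (deltaP n (n - j.val))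

/-- The exponent bounds for the bases `d` and `c`: `k_n < n` and `k_i < 2i` for `i < n`. -/
def mD (n : ℕ) : Fin n → ℕ := fun j => if j.val = 0 then n else 2 * (n - j.val)

/-- The exponent bounds for the basis `b`: `k_i < 2i`. -/
def mB (n : ℕ) : Fin n → ℕ := fun j => 2 * (n - j.val)


/-!
The letter `n` is moved by `γ_n` along `n → n-1 → ⋯ → 1` up to sign, so the powers `γ_n^k`,
`k < n`, form a left transversal in `B_n^+` of the elements sending `n` to `±n`. These are
exactly the images `ψ(w)` of `w ∈ B_{n-1}`; on `B_{n-1}`, which commutes with `v_n`, the map `ψ`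
is injective and multiplicative, being `w ↦ w · v_n^[ε(w) = -1]` for the sign character `ε`.
As `γ_i = ψ(β_i v_n) = ψ(β_i)` for `i < n`, everything reduces to the unique decomposition
`w = β_{n-1}^{k_{n-1}} ⋯ β_1^{k_1}`, `k_i < 2i`, of `w ∈ B_{n-1}`, which comes from the same
transversal argument: `β_i` cycles the `2i` letters `±1, …, ±i` and fixes the others. That
decomposition also shows that `S` generates `B_n`, so that the parity of the Coxeter length is
read off from `ε`.
-/

open Equiv

section Words

variable {G H : Type*} [Group G] [Group H]

theorem prodPow_succ {N : ℕ} (a : Fin (N + 1) → G) (k : Fin (N + 1) → ℕ) :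
    prodPow a k = a 0 ^ k 0 * prodPow (fun j => a j.succ) fun j => k j.succ := by
  simp [prodPow, List.ofFn_succ]

theorem map_prodPow {m : ℕ} (f : G →* H) (a : Fin m → G) (k : Fin m → ℕ) :
    f (prodPow a k) = prodPow (fun i => f (a i)) k := by
  simp [prodPow, map_list_prod, List.map_ofFn, Function.comp_def]

theorem prodPow_mem {S : Type*} [SetLike S G] [SubmonoidClass S G] {s : S} {m : ℕ}
    {a : Fin m → G} (ha : ∀ i, a i ∈ s) (k : Fin m → ℕ) : prodPow a k ∈ s :=
  list_prod_mem <| by simpa using fun i => pow_mem (ha i) (k i)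

def IsUniqueProdOn {m : ℕ} (a : Fin m → G) (M : Fin m → ℕ) (S : Set G) : Prop :=
  ∀ g ∈ S, ∃! k : (i : Fin m) → Fin (M i), g = prodPow a fun i => k i

namespace IsUniqueProdOn

variable {m : ℕ} {a : Fin m → G} {M : Fin m → ℕ} {S : Set G}

theorem of_subset_one {a : Fin 0 → G} {M : Fin 0 → ℕ} (hS : ∀ g ∈ S, g = 1) :
    IsUniqueProdOn a M S :=
  fun g hg => ⟨finZeroElim, hS g hg, fun _ _ => funext finZeroElim⟩

theorem congr (h : IsUniqueProdOn a M S) {a' : Fin m → G} {M' : Fin m → ℕ}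
    (ha : ∀ i, a i = a' i) (hM : ∀ i, M i = M' i) : IsUniqueProdOn a' M' S := by
  obtain rfl := funext ha
  obtain rfl := funext hM
  exact h

theorem image (h : IsUniqueProdOn a M S) (hS : ∀ k, prodPow a k ∈ S) {f : G → H}
    (hf : Set.InjOn f S) {b : Fin m → H} (hfb : ∀ k, f (prodPow a k) = prodPow b k) :
    IsUniqueProdOn b M (f '' S) := by
  rintro _ ⟨g, hg, rfl⟩
  obtain ⟨k, rfl, hk⟩ := h g hg
  exact ⟨k, hfb _, fun k' hk' => hk k' (hf hg (hS _) (hk'.trans (hfb _).symm))⟩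

/-- `hcover` and `hdisj` say that the powers `a 0 ^ k`, `k < M 0`, form a left transversal of
`L` in `K`. -/
theorem cons {N : ℕ} {a : Fin (N + 1) → G} {M : Fin (N + 1) → ℕ} {K L : Set G}
    (htail : IsUniqueProdOn (fun j => a j.succ) (fun j => M j.succ) L)
    (htail_mem : ∀ k, prodPow (fun j => a j.succ) k ∈ L)
    (hcover : ∀ g ∈ K, ∃ k < M 0, (a 0 ^ k)⁻¹ * g ∈ L)
    (hdisj : ∀ k < M 0, ∀ k' < M 0, ∀ l ∈ L, ∀ l' ∈ L,
      a 0 ^ k * l = a 0 ^ k' * l' → k = k') :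
    IsUniqueProdOn a M K := by
  intro g hg
  obtain ⟨k₀, hk₀, hl⟩ := hcover g hg
  obtain ⟨k', hk', huniq⟩ := htail _ hl
  refine ⟨Fin.cons (α := fun i => Fin (M i)) ⟨k₀, hk₀⟩ k', ?_, fun k hk => ?_⟩
  · dsimp only
    rw [prodPow_succ]
    simp only [Fin.cons_zero, Fin.cons_succ]
    rw [← hk', mul_inv_cancel_left]
  · dsimp only at hk
    rw [prodPow_succ] at hk
    have h0 : (k 0 : ℕ) = k₀ :=
      hdisj _ (k 0).isLt _ hk₀ _ (htail_mem _) _ hl (by rw [← hk, mul_inv_cancel_left])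
    have htl : Fin.tail k = k' := huniq _ <| by
      rw [hk, h0, inv_mul_cancel_left]
      rfl
    rw [← Fin.cons_self_tail k, htl]
    congr
    exact Fin.ext h0

end IsUniqueProdOn

theorem exists_list_length_eq_wordLength {S : Set G} {g : G} (hg : g ∈ Submonoid.closure S) :
    ∃ l : List G, (∀ x ∈ l, x ∈ S) ∧ l.length = wordLength S g ∧ l.prod = g := by
  obtain ⟨l, hl, rfl⟩ := Submonoid.exists_list_of_mem_closure hg
  exact Nat.sInf_mem
    (s := {n | ∃ w : List G, (∀ x ∈ w, x ∈ S) ∧ w.length = n ∧ w.prod = l.prod})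
    ⟨l.length, l, hl, rfl, rfl⟩

end Words

section SignedPerm

variable {n : ℕ}

def hyperoctahedral (n : ℕ) : Subgroup (Perm (SF n)) where
  carrier := BSet n
  mul_mem' {u w} hu hw x := by simp only [Perm.mul_apply, hw x, hu (w x)]
  one_mem' _ := rfl
  inv_mem' {w} hw x := by
    rw [Perm.inv_eq_iff_eq, hw, ← Perm.mul_apply, mul_inv_cancel, Perm.one_apply]

theorem fst_apply_congr {w : Perm (SF n)} (hw : w ∈ hyperoctahedral n) {x y : SF n}
    (h : x.1 = y.1) : (w x).1 = (w y).1 := by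
  obtain ⟨a, b⟩ := x
  obtain ⟨a', c⟩ := y
  obtain rfl : a = a' := h
  obtain rfl | rfl : c = b ∨ c = !b := by cases b <;> cases c <;> simp
  · rfl
  · exact (congrArg Prod.fst (hw (a, b))).symm

theorem apply_true_eq_self {w : Perm (SF n)} (hw : w ∈ hyperoctahedral n) {a : Fin n}
    (h : w (a, false) = (a, false)) : w (a, true) = (a, true) := by
  simpa [negx, h] using hw (a, false)

theorem negSwap_mem (p : Fin n) : swap (p, false) (p, true) ∈ hyperoctahedral n := by
  rintro ⟨a, b⟩
  cases b <;> simp [negx, swap_apply_def, Prod.ext_iff] <;> split_ifs <;> simp_all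

theorem pairSwap_mem (p q : Fin n) :
    swap (p, false) (q, false) * swap (p, true) (q, true) ∈ hyperoctahedral n := by
  rintro ⟨a, b⟩
  cases b <;> simp [negx, swap_apply_def, Prod.ext_iff] <;> split_ifs <;> simp_all

theorem sadj_apply {j : ℕ} (h : j + 1 < n) (x : SF n) :
    sadj n j x = (swap ⟨j, by omega⟩ ⟨j + 1, h⟩ x.1, x.2) := by
  obtain ⟨a, b⟩ := x
  rw [sadj, dif_pos h]
  cases b <;> simp [swap_apply_def, Prod.ext_iff] <;> split_ifs <;> simp_all

theorem sadj_of_le {j : ℕ} (h : n ≤ j + 1) : sadj n j = 1 := dif_neg (by omega)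

theorem s0B_eq (hn : 0 < n) : s0B n = swap (⟨0, hn⟩, false) (⟨0, hn⟩, true) := dif_pos hn

theorem muP_succ {N : ℕ} : muP (N + 1) = swap (Fin.last N, false) (Fin.last N, true) :=
  dif_pos N.succ_pos

theorem SgenB_subset : SgenB n ⊆ hyperoctahedral n := by
  rintro _ (rfl | ⟨j, hj, rfl⟩)
  · unfold s0B; split
    · exact negSwap_mem _
    · exact one_mem _
  · rw [sadj, dif_pos hj]
    exact pairSwap_mem _ _

theorem sadj_mem_closure (j : ℕ) : sadj n j ∈ Submonoid.closure (SgenB n) := by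
  by_cases h : j + 1 < n
  · exact Submonoid.subset_closure (Or.inr ⟨j, h, rfl⟩)
  · rw [sadj_of_le (by omega)]
    exact one_mem _

theorem closure_SgenB_le : Submonoid.closure (SgenB n) ≤ (hyperoctahedral n).toSubmonoid :=
  Submonoid.closure_le.2 SgenB_subset

end SignedPerm

section Generators

variable {n : ℕ}

/-- `s_i ⋯ s_2 s_1` in Coxeter notation, where `sadj n j` is `s_{j+1}`. -/
def sadjProd (n i : ℕ) : Perm (SF n) := ((List.range i).reverse.map (sadj n)).prod

theorem sadjProd_succ (i : ℕ) : sadjProd n (i + 1) = sadj n i * sadjProd n i := by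
  simp [sadjProd, List.range_succ]

theorem sadjProd_mem_closure (i : ℕ) : sadjProd n i ∈ Submonoid.closure (SgenB n) :=
  Submonoid.list_prod_mem _ <| by simpa using fun j _ => sadj_mem_closure j

theorem sadjProd_apply_of_lt {i : ℕ} (a : Fin n) (b : Bool) (h : i < a) :
    sadjProd n i (a, b) = (a, b) := by
  induction i with
  | zero => rfl
  | succ i ih =>
    rw [sadjProd_succ, Perm.mul_apply, ih (by omega), sadj_apply (by omega),
      swap_apply_of_ne_of_ne (by simp [Fin.ext_iff]; omega) (by simp [Fin.ext_iff]; omega)]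

theorem sadjProd_apply_zero {i : ℕ} (hi : i < n) (b : Bool) :
    sadjProd n i (⟨0, by omega⟩, b) = (⟨i, hi⟩, b) := by
  induction i with
  | zero => rfl
  | succ i ih =>
    rw [sadjProd_succ, Perm.mul_apply, ih (by omega), sadj_apply hi, swap_apply_left]

theorem sadjProd_apply_of_le {i a : ℕ} (hi : i < n) (ha : 1 ≤ a) (hai : a ≤ i) (b : Bool) :
    sadjProd n i (⟨a, by omega⟩, b) = (⟨a - 1, by omega⟩, b) := by
  induction i with
  | zero => omega
  | succ i ih =>
    rw [sadjProd_succ, Perm.mul_apply, sadj_apply hi]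
    rcases Nat.lt_or_ge a (i + 1) with h | h
    · rw [ih (by omega) (by omega),
        swap_apply_of_ne_of_ne (by simp [Fin.ext_iff]; omega) (by simp [Fin.ext_iff]; omega)]
    · obtain rfl : a = i + 1 := by omega
      rw [sadjProd_apply_of_lt _ _ (by simp), swap_apply_right]
      rfl

theorem betaP_eq (i : ℕ) : betaP n i = sadjProd n (i - 1) * s0B n := rfl

theorem betaP_mem_closure (i : ℕ) : betaP n i ∈ Submonoid.closure (SgenB n) :=
  mul_mem (sadjProd_mem_closure _) (Submonoid.subset_closure (Or.inl rfl))

theorem betaP_mem (i : ℕ) : betaP n i ∈ hyperoctahedral n :=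
  closure_SgenB_le (betaP_mem_closure i)

theorem s0B_apply_of_ne (a : Fin n) (b : Bool) (h : a.val ≠ 0) : s0B n (a, b) = (a, b) := by
  unfold s0B; split
  · exact swap_apply_of_ne_of_ne (by simp [Prod.ext_iff, Fin.ext_iff, h])
      (by simp [Prod.ext_iff, Fin.ext_iff, h])
  · rfl

theorem betaP_apply_of_le {i : ℕ} (a : Fin n) (b : Bool) (h0 : 0 < i) (h : i ≤ a) :
    betaP n i (a, b) = (a, b) := by
  rw [betaP_eq, Perm.mul_apply, s0B_apply_of_ne _ _ (by omega),
    sadjProd_apply_of_lt _ _ (by omega)]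

theorem betaP_apply_zero {i : ℕ} (hi : 1 ≤ i) (hin : i ≤ n) (b : Bool) :
    betaP n i (⟨0, by omega⟩, b) = (⟨i - 1, by omega⟩, !b) := by
  rw [betaP_eq, Perm.mul_apply, s0B_eq (by omega)]
  cases b <;> simp only [swap_apply_left, swap_apply_right] <;> exact sadjProd_apply_zero _ _

theorem betaP_apply_of_lt {i a : ℕ} (hin : i ≤ n) (ha : 1 ≤ a) (hai : a < i) (b : Bool) :
    betaP n i (⟨a, by omega⟩, b) = (⟨a - 1, by omega⟩, b) := by
  rw [betaP_eq, Perm.mul_apply, s0B_apply_of_ne _ _ (by simp; omega),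
    sadjProd_apply_of_le (by omega) ha (by omega)]

theorem betaP_pow_apply_of_lt {i k : ℕ} (hi : 1 ≤ i) (hin : i ≤ n) (hk : k < i) (b : Bool) :
    (betaP n i ^ k) (⟨i - 1, by omega⟩, b) = (⟨i - 1 - k, by omega⟩, b) := by
  induction k with
  | zero => rfl
  | succ k ih =>
    rw [pow_succ', Perm.mul_apply, ih (by omega), betaP_apply_of_lt hin (by omega) (by omega)]
    rfl

/-- `β_i` cycles the `2i` letters `±1, …, ±i` as `i → i-1 → ⋯ → 1 → -i → ⋯ → -1 → i`. -/
theorem betaP_pow_apply {i k : ℕ} (hi : 1 ≤ i) (hin : i ≤ n) (hk : k < 2 * i) :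
    (betaP n i ^ k) (⟨i - 1, by omega⟩, false) =
      if k < i then (⟨i - 1 - k, by omega⟩, false)
      else (⟨i - 1 - (k - i), by omega⟩, true) := by
  split_ifs with h
  · exact betaP_pow_apply_of_lt hi hin h false
  · obtain ⟨c, rfl⟩ : ∃ c, k = c + (1 + (i - 1)) := ⟨k - i, by omega⟩
    rw [pow_add, pow_add, pow_one, Perm.mul_apply, Perm.mul_apply,
      betaP_pow_apply_of_lt (k := i - 1) hi hin (by omega)]
    simp only [Nat.sub_self]
    rw [betaP_apply_zero hi hin, betaP_pow_apply_of_lt hi hin (by omega)]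
    simp only [Bool.not_false, Prod.mk.injEq, Fin.mk.injEq, and_true]
    omega

theorem eq_of_betaP_pow_apply_eq {i : ℕ} (hi : 1 ≤ i) (hin : i ≤ n) {k k' : ℕ}
    (hk : k < 2 * i) (hk' : k' < 2 * i)
    (h : (betaP n i ^ k) (⟨i - 1, by omega⟩, false) =
      (betaP n i ^ k') (⟨i - 1, by omega⟩, false)) :
    k = k' := by
  rw [betaP_pow_apply hi hin hk, betaP_pow_apply hi hin hk'] at h
  split_ifs at h <;> simp [Prod.ext_iff, Fin.ext_iff] at h <;> omega

theorem exists_betaP_pow_apply {i : ℕ} (hi : 1 ≤ i) (hin : i ≤ n) (x : SF n)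
    (hx : x.1 < i) :
    ∃ k < 2 * i, (betaP n i ^ k) (⟨i - 1, by omega⟩, false) = x := by
  obtain ⟨⟨a, ha⟩, b⟩ := x
  simp only at hx
  cases b
  · refine ⟨i - 1 - a, by omega, ?_⟩
    rw [betaP_pow_apply hi hin (by omega), if_pos (by omega)]
    simp only [Prod.mk.injEq, Fin.mk.injEq, and_true]
    omega
  · refine ⟨2 * i - 1 - a, by omega, ?_⟩
    rw [betaP_pow_apply hi hin (by omega), if_neg (by omega)]
    simp only [Prod.mk.injEq, Fin.mk.injEq, and_true]
    omega

end Generators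

section BetaBasis

variable {n m : ℕ}

/-- The copy of `B_m` in `B_n`: signed permutations fixing the letters `±(m+1), …, ±n`. -/
def hyperoctahedralBelow (n m : ℕ) : Subgroup (Perm (SF n)) where
  carrier := {w | w ∈ hyperoctahedral n ∧ ∀ a : Fin n, m ≤ a.val → w (a, false) = (a, false)}
  mul_mem' hu hw :=
    ⟨mul_mem hu.1 hw.1, fun a ha => by rw [Perm.mul_apply, hw.2 a ha, hu.2 a ha]⟩
  one_mem' := ⟨one_mem _, fun _ _ => rfl⟩
  inv_mem' hw := ⟨inv_mem hw.1, fun a ha => by rw [Perm.inv_eq_iff_eq, hw.2 a ha]⟩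

theorem apply_eq_self_of_mem_below {w : Perm (SF n)} (hw : w ∈ hyperoctahedralBelow n m)
    {x : SF n} (hx : m ≤ x.1.val) : w x = x := by
  obtain ⟨a, _ | _⟩ := x
  · exact hw.2 a hx
  · exact apply_true_eq_self hw.1 (hw.2 a hx)

theorem fst_apply_lt_of_mem_below {w : Perm (SF n)} (hw : w ∈ hyperoctahedralBelow n m)
    {x : SF n} (hx : x.1.val < m) : (w x).1.val < m := by
  by_contra h
  have hfix := apply_eq_self_of_mem_below hw (not_lt.1 h)
  rw [w.injective hfix] at h
  exact h hx

theorem mem_below_of_apply_eq_self {w : Perm (SF n)} (hw : w ∈ hyperoctahedralBelow n (m + 1))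
    (hm : m < n) (h : w (⟨m, hm⟩, false) = (⟨m, hm⟩, false)) :
    w ∈ hyperoctahedralBelow n m := by
  refine ⟨hw.1, fun a ha => ?_⟩
  obtain rfl | ha := eq_or_lt_of_le ha
  · exact h
  · exact hw.2 a ha

theorem betaP_mem_below {i : ℕ} (hi : 1 ≤ i) (him : i ≤ m) :
    betaP n i ∈ hyperoctahedralBelow n m :=
  ⟨betaP_mem i, fun a ha => betaP_apply_of_le a false hi (by omega)⟩

theorem isUniqueProdOn_betaP (hm : m ≤ n) :
    IsUniqueProdOn (fun j : Fin m => betaP n (m - j)) (fun j => 2 * (m - j))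
      (hyperoctahedralBelow n m) := by
  induction m with
  | zero =>
    refine IsUniqueProdOn.of_subset_one fun w hw => Equiv.ext fun x => ?_
    exact apply_eq_self_of_mem_below hw (Nat.zero_le _)
  | succ m ih =>
    have hβ : betaP n (m + 1) ∈ hyperoctahedralBelow n (m + 1) :=
      betaP_mem_below le_add_self le_rfl
    refine IsUniqueProdOn.cons (L := hyperoctahedralBelow n m)
      ((ih (by omega)).congr (fun j => by simp) (fun j => by simp))
      (prodPow_mem fun j => betaP_mem_below (by simp; omega) (by simp))
      (fun w hw => ?_) (fun k hk k' hk' l hl l' hl' h => ?_)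
    · obtain ⟨k, hk, hkw⟩ := exists_betaP_pow_apply (i := m + 1) (by omega) hm
        (w (⟨m, by omega⟩, false)) (fst_apply_lt_of_mem_below hw (by simp))
      refine ⟨k, hk, mem_below_of_apply_eq_self
        (mul_mem (inv_mem (pow_mem hβ k)) hw) (by omega) ?_⟩
      rw [Perm.mul_apply, Perm.inv_eq_iff_eq]
      exact hkw.symm
    · refine eq_of_betaP_pow_apply_eq (i := m + 1) (by omega) hm hk hk' ?_
      have := congrArg (· (⟨m, by omega⟩, false)) h
      simp only [Perm.mul_apply] at this
      rwa [hl.2 _ le_rfl, hl'.2 _ le_rfl] at this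

theorem closure_SgenB : Submonoid.closure (SgenB n) = (hyperoctahedral n).toSubmonoid := by
  refine le_antisymm closure_SgenB_le fun w hw => ?_
  obtain ⟨k, rfl, -⟩ :=
    isUniqueProdOn_betaP le_rfl w ⟨hw, fun a ha => absurd a.isLt (by omega)⟩
  exact prodPow_mem (fun j => betaP_mem_closure _) _

end BetaBasis

section CoxeterSign

variable {n : ℕ}

def absPerm (n : ℕ) : hyperoctahedral n →* Perm (Fin n) :=
  MonoidHom.toHomPerm
    { toFun := fun w i => (w.1 (i, false)).1
      map_one' := rfl
      map_mul' := fun u _ => funext fun _ => fst_apply_congr u.2 rfl }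

theorem absPerm_apply (w : hyperoctahedral n) (i : Fin n) :
    absPerm n w i = (w.1 (i, false)).1 :=
  rfl

/-- `s_0` is a transposition of letters fixing all absolute values, while `s_i`, `i ≥ 1`, is an
even permutation of letters transposing two absolute values; so this character is `-1` on every
Coxeter generator. -/
def coxeterSign (n : ℕ) : hyperoctahedral n →* ℤˣ :=
  Perm.sign.comp (absPerm n) * Perm.sign.comp (hyperoctahedral n).subtype

theorem coxeterSign_negSwap {p : Fin n} {w : Perm (SF n)} (hw : w ∈ hyperoctahedral n)
    (h : w = swap (p, false) (p, true)) : coxeterSign n ⟨w, hw⟩ = -1 := by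
  subst h
  have habs : absPerm n ⟨_, hw⟩ = 1 := Equiv.ext fun i => by
    rw [absPerm_apply]
    by_cases hi : i = p
    · simp [hi]
    · rw [swap_apply_of_ne_of_ne (by simp [hi]) (by simp [hi])]
      rfl
  simp [coxeterSign, habs]

theorem coxeterSign_sadj {j : ℕ} (hj : j + 1 < n) (hw : sadj n j ∈ hyperoctahedral n) :
    coxeterSign n ⟨sadj n j, hw⟩ = -1 := by
  have habs : absPerm n ⟨_, hw⟩ = swap ⟨j, by omega⟩ ⟨j + 1, hj⟩ := Equiv.ext fun i => by
    rw [absPerm_apply, sadj_apply hj]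
  have hsign : Perm.sign (sadj n j) = 1 := by
    rw [sadj, dif_pos hj, map_mul, Perm.sign_swap (by simp), Perm.sign_swap (by simp)]
    rfl
  simp [coxeterSign, habs, hsign, Fin.ext_iff]

theorem coxeterSign_of_mem_SgenB (hn : 0 < n) {s : Perm (SF n)} (hs : s ∈ SgenB n) :
    coxeterSign n ⟨s, SgenB_subset hs⟩ = -1 := by
  rcases hs with rfl | ⟨j, hj, rfl⟩
  · exact coxeterSign_negSwap _ (s0B_eq hn)
  · exact coxeterSign_sadj hj _

theorem coxeterSign_list_prod (hn : 0 < n) {l : List (Perm (SF n))}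
    (hl : ∀ s ∈ l, s ∈ SgenB n) (h : l.prod ∈ hyperoctahedral n) :
    coxeterSign n ⟨l.prod, h⟩ = (-1) ^ l.length := by
  induction l with
  | nil => exact map_one _
  | cons s l ih =>
    have hs := hl s List.mem_cons_self
    have htail : ∀ t ∈ l, t ∈ SgenB n := fun t ht => hl t (List.mem_cons_of_mem s ht)
    have hprod : l.prod ∈ hyperoctahedral n := closure_SgenB_le <|
      Submonoid.list_prod_mem _ fun t ht => Submonoid.subset_closure (htail t ht)
    change coxeterSign n (⟨s, SgenB_subset hs⟩ * ⟨l.prod, hprod⟩) = _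
    rw [map_mul, coxeterSign_of_mem_SgenB hn hs, ih htail, List.length_cons, pow_succ']

theorem coxeterSign_eq_neg_one_pow_wordLength (hn : 0 < n) {w : Perm (SF n)}
    (hw : w ∈ hyperoctahedral n) : coxeterSign n ⟨w, hw⟩ = (-1) ^ wordLength (SgenB n) w := by
  obtain ⟨l, hl, hlen, rfl⟩ :=
    exists_list_length_eq_wordLength (by rw [closure_SgenB]; exact hw)
  rw [← hlen, coxeterSign_list_prod hn hl]

def hyperoctahedralPlus (n : ℕ) : Subgroup (Perm (SF n)) :=
  (coxeterSign n).ker.map (hyperoctahedral n).subtype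

theorem mem_hyperoctahedralPlus {w : Perm (SF n)} (hw : w ∈ hyperoctahedral n) :
    w ∈ hyperoctahedralPlus n ↔ coxeterSign n ⟨w, hw⟩ = 1 := by
  simp [hyperoctahedralPlus, Subgroup.mem_map, hw]

theorem mem_BplusSet_iff (hn : 0 < n) {w : Perm (SF n)} :
    w ∈ BplusSet n ↔ w ∈ hyperoctahedralPlus n := by
  by_cases hw : w ∈ hyperoctahedral n
  · rw [mem_hyperoctahedralPlus hw, coxeterSign_eq_neg_one_pow_wordLength hn hw,
      neg_one_pow_eq_one_iff_even (by decide)]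
    exact and_iff_right hw
  · exact iff_of_false (fun h => hw h.1) fun h => hw (Subgroup.map_subtype_le _ h)

end CoxeterSign

section Psi

variable {N : ℕ}

local notation "top" => Fin.last N

theorem muP_mem : muP (N + 1) ∈ hyperoctahedral (N + 1) := muP_succ ▸ negSwap_mem _

theorem muP_apply_last (b : Bool) : muP (N + 1) (top, b) = (top, !b) := by
  cases b <;> simp [muP_succ]

theorem muP_apply_of_ne {a : Fin (N + 1)} (b : Bool) (ha : a ≠ top) :
    muP (N + 1) (a, b) = (a, b) := by
  rw [muP_succ]
  exact swap_apply_of_ne_of_ne (by simp [ha]) (by simp [ha])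

theorem muP_mul_self : muP (N + 1) * muP (N + 1) = 1 := by
  rw [muP_succ, swap_mul_self]

theorem coxeterSign_mul_muP {w : Perm (SF (N + 1))} (hw : w ∈ hyperoctahedral (N + 1)) :
    coxeterSign (N + 1) ⟨w * muP (N + 1), mul_mem hw muP_mem⟩ =
      -coxeterSign (N + 1) ⟨w, hw⟩ := by
  change coxeterSign (N + 1) (⟨w, hw⟩ * ⟨_, muP_mem⟩) = _
  rw [map_mul, coxeterSign_negSwap _ muP_succ, mul_neg_one]

theorem psiP_eq_ite {w : Perm (SF (N + 1))} (hw : w ∈ hyperoctahedral (N + 1)) :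
    psiP (N + 1) w = if coxeterSign (N + 1) ⟨w, hw⟩ = 1 then w else w * muP (N + 1) := by
  simp only [psiP, mem_BplusSet_iff N.succ_pos, mem_hyperoctahedralPlus hw]

theorem psiP_mem {w : Perm (SF (N + 1))} (hw : w ∈ hyperoctahedral (N + 1)) :
    psiP (N + 1) w ∈ hyperoctahedralPlus (N + 1) := by
  rw [psiP_eq_ite hw]
  split_ifs with h
  · exact (mem_hyperoctahedralPlus hw).2 h
  · rw [mem_hyperoctahedralPlus (mul_mem hw muP_mem), coxeterSign_mul_muP hw]
    rcases Int.units_eq_one_or (coxeterSign (N + 1) ⟨w, hw⟩) with h' | h'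
    · exact absurd h' h
    · rw [h', neg_neg]

theorem psiP_mul_muP {w : Perm (SF (N + 1))} (hw : w ∈ hyperoctahedral (N + 1)) :
    psiP (N + 1) (w * muP (N + 1)) = psiP (N + 1) w := by
  rw [psiP_eq_ite hw, psiP_eq_ite (mul_mem hw muP_mem), coxeterSign_mul_muP hw]
  rcases Int.units_eq_one_or (coxeterSign (N + 1) ⟨w, hw⟩) with h | h <;>
    simp [h, mul_assoc, muP_mul_self]

theorem commute_muP {w : Perm (SF (N + 1))} (hw : w ∈ hyperoctahedralBelow (N + 1) N) :
    Commute (muP (N + 1)) w := by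
  refine Equiv.ext fun ⟨a, b⟩ => ?_
  simp only [Perm.mul_apply]
  by_cases ha : a = top
  · subst ha
    rw [apply_eq_self_of_mem_below hw (x := (top, b)) le_rfl, muP_apply_last,
      apply_eq_self_of_mem_below hw (x := (top, !b)) le_rfl]
  · have hwa : (w (a, b)).1 ≠ top := fun h =>
      (fst_apply_lt_of_mem_below hw (x := (a, b)) (Fin.val_lt_last ha)).ne (by rw [h]; rfl)
    rw [muP_apply_of_ne b ha, ← Prod.mk.eta (p := w (a, b)), muP_apply_of_ne _ hwa]

theorem psiP_mul {u w : Perm (SF (N + 1))} (hu : u ∈ hyperoctahedralBelow (N + 1) N)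
    (hw : w ∈ hyperoctahedralBelow (N + 1) N) :
    psiP (N + 1) (u * w) = psiP (N + 1) u * psiP (N + 1) w := by
  have hmul : coxeterSign (N + 1) ⟨u * w, mul_mem hu.1 hw.1⟩ =
      coxeterSign (N + 1) ⟨u, hu.1⟩ * coxeterSign (N + 1) ⟨w, hw.1⟩ :=
    map_mul (coxeterSign (N + 1)) (⟨u, hu.1⟩ : hyperoctahedral (N + 1)) ⟨w, hw.1⟩
  rw [psiP_eq_ite hu.1, psiP_eq_ite hw.1, psiP_eq_ite (mul_mem hu.1 hw.1), hmul]
  have hc := (commute_muP hw).eq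
  have hne : (-1 : ℤˣ) ≠ 1 := by decide
  rcases Int.units_eq_one_or (coxeterSign (N + 1) ⟨u, hu.1⟩) with h | h <;>
  rcases Int.units_eq_one_or (coxeterSign (N + 1) ⟨w, hw.1⟩) with h' | h' <;>
    simp only [h, h', mul_one, mul_neg, neg_neg, hne, if_true, if_false]
  · rw [mul_assoc]
  · rw [mul_assoc, mul_assoc, hc]
  · rw [mul_assoc, ← mul_assoc (muP _), hc, mul_assoc, muP_mul_self, mul_one]

noncomputable def psiHom (N : ℕ) : hyperoctahedralBelow (N + 1) N →* Perm (SF (N + 1)) where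
  toFun w := psiP (N + 1) w
  map_one' := by
    change psiP (N + 1) 1 = 1
    rw [psiP_eq_ite (one_mem _)]
    exact if_pos (map_one (coxeterSign (N + 1)))
  map_mul' u w := psiP_mul u.2 w.2

theorem psiP_prodPow {m : ℕ} {a : Fin m → Perm (SF (N + 1))}
    (ha : ∀ i, a i ∈ hyperoctahedralBelow (N + 1) N) (k : Fin m → ℕ) :
    psiP (N + 1) (prodPow a k) = prodPow (fun i => psiP (N + 1) (a i)) k := by
  have h := map_prodPow (hyperoctahedralBelow (N + 1) N).subtype (fun i => ⟨a i, ha i⟩) k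
  rw [Subgroup.coe_subtype] at h
  rw [← h]
  exact map_prodPow (psiHom N) _ k

theorem psiP_eq_or (w : Perm (SF (N + 1))) :
    psiP (N + 1) w = w ∨ psiP (N + 1) w = w * muP (N + 1) := by
  unfold psiP
  split_ifs <;> simp

theorem mem_below_last_iff {w : Perm (SF (N + 1))} :
    w ∈ hyperoctahedralBelow (N + 1) N ↔
      w ∈ hyperoctahedral (N + 1) ∧ w (top, false) = (top, false) := by
  refine ⟨fun h => ⟨h.1, h.2 _ le_rfl⟩, fun h => ⟨h.1, fun a ha => ?_⟩⟩
  obtain rfl : a = top := Fin.ext (by simp; omega)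
  exact h.2

theorem psiP_injOn : Set.InjOn (psiP (N + 1)) (hyperoctahedralBelow (N + 1) N) := by
  have key : ∀ {u w}, u ∈ hyperoctahedralBelow (N + 1) N → w ∈ hyperoctahedralBelow (N + 1) N →
      u ≠ w * muP (N + 1) := fun hu hw h => by
    have := congrArg (· (top, false)) h
    simp [muP_apply_last, apply_eq_self_of_mem_below hu (x := (top, _)) le_rfl,
      apply_eq_self_of_mem_below hw (x := (top, _)) le_rfl] at this
  intro u hu w hw h
  rcases psiP_eq_or u with hu' | hu' <;> rcases psiP_eq_or w with hw' | hw' <;>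
    rw [hu', hw'] at h
  · exact h
  · exact absurd h (key hu hw)
  · exact absurd h.symm (key hw hu)
  · exact mul_right_cancel h

theorem image_psiP_below : psiP (N + 1) '' hyperoctahedralBelow (N + 1) N =
    {ρ | ρ ∈ hyperoctahedralPlus (N + 1) ∧ (ρ (top, false)).1 = top} := by
  ext ρ
  constructor
  · rintro ⟨w, hw, rfl⟩
    refine ⟨psiP_mem hw.1, ?_⟩
    rcases psiP_eq_or w with h | h <;> rw [h]
    · rw [hw.2 _ le_rfl]
    · rw [Perm.mul_apply, muP_apply_last, Bool.not_false,
        apply_eq_self_of_mem_below hw (x := (top, true)) le_rfl]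
  · rintro ⟨hρ, htop⟩
    have hρB : ρ ∈ hyperoctahedral (N + 1) := Subgroup.map_subtype_le _ hρ
    have hψ : psiP (N + 1) ρ = ρ := if_pos ((mem_BplusSet_iff N.succ_pos).2 hρ)
    obtain ⟨b, hb⟩ : ∃ b, ρ (top, false) = (top, b) := ⟨_, Prod.ext htop rfl⟩
    cases b
    · exact ⟨ρ, mem_below_last_iff.2 ⟨hρB, hb⟩, hψ⟩
    · refine ⟨ρ * muP (N + 1), mem_below_last_iff.2 ⟨mul_mem hρB muP_mem, ?_⟩,
        by rw [psiP_mul_muP hρB, hψ]⟩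
      simpa [muP_apply_last, negx, hb] using hρB (top, false)

end Psi

section Gamma

variable {N : ℕ}

local notation "top" => Fin.last N

local notation "γ" => psiP (N + 1) (deltaP (N + 1) (N + 1))

theorem fst_muP_apply (x : SF (N + 1)) : (muP (N + 1) x).1 = x.1 := by
  obtain ⟨a, b⟩ := x
  by_cases ha : a = top
  · rw [ha, muP_apply_last]
  · rw [muP_apply_of_ne b ha]

theorem gamma_mem : γ ∈ hyperoctahedralPlus (N + 1) :=
  psiP_mem <| closure_SgenB_le <| by rw [deltaP, if_pos rfl]; exact sadjProd_mem_closure N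

theorem fst_gamma_apply {a : ℕ} (ha : 1 ≤ a) (haN : a ≤ N) (b : Bool) :
    ((γ (⟨a, by omega⟩, b)).1 : ℕ) = a - 1 := by
  have hδ : deltaP (N + 1) (N + 1) = sadjProd (N + 1) N := if_pos rfl
  have hδB : sadjProd (N + 1) N ∈ hyperoctahedral (N + 1) :=
    closure_SgenB_le (sadjProd_mem_closure N)
  rcases psiP_eq_or (deltaP (N + 1) (N + 1)) with h | h <;> rw [h, hδ]
  · rw [sadjProd_apply_of_le (by omega) ha haN]
  · rw [Perm.mul_apply, fst_apply_congr hδB (fst_muP_apply _),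
      sadjProd_apply_of_le (by omega) ha haN]

theorem fst_gamma_pow_apply {k : ℕ} (hk : k ≤ N) {x : SF (N + 1)} (hx : x.1 = top) :
    (((γ ^ k) x).1 : ℕ) = N - k := by
  induction k with
  | zero => simp [hx]
  | succ k ih =>
    rcases hy : (γ ^ k) x with ⟨⟨a, ha⟩, c⟩
    rw [hy] at ih
    simp only at ih
    obtain rfl := ih (by omega)
    rw [pow_succ', Perm.mul_apply, hy, fst_gamma_apply (by omega) (by omega)]
    omega

theorem eq_of_gamma_pow_mul_eq {k k' : ℕ} (hk : k ≤ N) (hk' : k' ≤ N)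
    {l l' : Perm (SF (N + 1))} (hl : (l (top, false)).1 = top) (hl' : (l' (top, false)).1 = top)
    (h : γ ^ k * l = γ ^ k' * l') : k = k' := by
  have := congrArg (fun w => ((w (top, false)).1 : ℕ)) h
  simp only [Perm.mul_apply] at this
  rw [fst_gamma_pow_apply hk hl, fst_gamma_pow_apply hk' hl'] at this
  omega

theorem exists_gamma_pow_inv_mul_mem {π : Perm (SF (N + 1))}
    (hπ : π ∈ hyperoctahedralPlus (N + 1)) :
    ∃ k ≤ N, (γ ^ k)⁻¹ * π ∈ psiP (N + 1) '' hyperoctahedralBelow (N + 1) N := by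
  have hk : N - (π (top, false)).1 ≤ N := Nat.sub_le _ _
  refine ⟨_, hk, ?_⟩
  rw [image_psiP_below]
  have hγ : (γ ^ (N - (π (top, false)).1))⁻¹ ∈ hyperoctahedralPlus (N + 1) :=
    inv_mem (pow_mem gamma_mem _)
  refine ⟨mul_mem hγ hπ, ?_⟩
  have hfst : ((γ ^ (N - (π (top, false)).1)) (top, false)).1 = (π (top, false)).1 :=
    Fin.ext <| by rw [fst_gamma_pow_apply hk rfl]; omega
  rw [Perm.mul_apply, ← fst_apply_congr (Subgroup.map_subtype_le _ hγ) hfst, ← Perm.mul_apply,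
    inv_mul_cancel, Perm.one_apply]

theorem cSeq_succ (j : Fin N) :
    cSeq (N + 1) j.succ = psiP (N + 1) (betaP (N + 1) (N - j)) := by
  simp only [cSeq]
  rw [Fin.val_succ, Nat.add_sub_add_right, deltaP, if_neg (by omega),
    psiP_mul_muP (betaP_mem _)]

theorem isUniqueProdOn_cSeq :
    IsUniqueProdOn (cSeq (N + 1)) (mD (N + 1)) (BplusSet (N + 1)) := by
  have hβ : ∀ j : Fin N, betaP (N + 1) (N - j) ∈ hyperoctahedralBelow (N + 1) N :=
    fun j => betaP_mem_below (by omega) (by omega)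
  have htail : (fun j : Fin N => cSeq (N + 1) j.succ) =
      fun j : Fin N => psiP (N + 1) (betaP (N + 1) (N - j)) := funext cSeq_succ
  have hM : mD (N + 1) 0 = N + 1 := rfl
  refine IsUniqueProdOn.cons (L := psiP (N + 1) '' hyperoctahedralBelow (N + 1) N) ?_ ?_
    (fun π hπ => ?_) (fun k hk k' hk' l hl l' hl' h => ?_)
  · rw [htail]
    exact ((isUniqueProdOn_betaP N.le_succ).image (prodPow_mem hβ) psiP_injOn
      (psiP_prodPow hβ)).congr (fun _ => rfl) (fun j => by simp [mD])
  · rw [htail]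
    exact fun k => ⟨_, prodPow_mem hβ k, psiP_prodPow hβ k⟩
  · obtain ⟨k, hk, hmem⟩ := exists_gamma_pow_inv_mul_mem ((mem_BplusSet_iff N.succ_pos).1 hπ)
    exact ⟨k, by omega, hmem⟩
  · rw [image_psiP_below] at hl hl'
    exact eq_of_gamma_pow_mul_eq (by omega) (by omega) hl.2 hl'.2 h

end Gamma

/-- Every element `π` of the alternating subgroup `B_n^+` of the
hyperoctahedral group has a unique presentation `π = γ_n^{k_n} γ_{n-1}^{k_{n-1}} ⋯ γ_1^{k_1}`
with `0 ≤ k_n < n` and `0 ≤ k_i < 2i` for `1 ≤ i ≤ n-1`. -/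
theorem gamma_uniqueProd_Bplus (n : ℕ) :
    ∀ π ∈ BplusSet n,
      ∃! k : (j : Fin n) → Fin (mD n j), π = prodPow (cSeq n) fun j => (k j : ℕ) := by
  cases n with
  | zero => exact IsUniqueProdOn.of_subset_one fun π _ => Equiv.ext fun x => x.1.elim0
  | succ N => exact isUniqueProdOn_cSeq
end

section
/- For any prime p, the complex reflection group G(p², p, p) has no perfect Hilbertian basis; explicitly, there is no perfect basis (t_0, t_1, …, t_{p−1}) of G(p², p, p) whose multiset of element orders equals {p², p², 2p², 3p², …, (p−1)p²} (i.e., a basis with, after reordering, ord(t_0) = p², ord(t_i) = (i+1)p² for 1 ≤ i ≤ p−2, and ord(t_{p−1}) = p²). -/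
/-- The wreath product `G(r,n) = Z_r ≀ S_n`: pairs `((c_1,…,c_n); π)` with `c_i ∈ Z_r`,
`π ∈ S_n`. -/
@[ext]
structure WreathZ (r n : ℕ) where
  c : Fin n → ZMod r
  pi : Equiv.Perm (Fin n)

namespace WreathZ

variable {r n : ℕ}

instance : Mul (WreathZ r n) :=
  ⟨fun x y => ⟨fun i => x.c i + y.c (x.pi⁻¹ i), x.pi * y.pi⟩⟩

instance : One (WreathZ r n) := ⟨⟨0, 1⟩⟩

instance : Inv (WreathZ r n) := ⟨fun x => ⟨fun i => -x.c (x.pi i), x.pi⁻¹⟩⟩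

@[simp] lemma mul_c (x y : WreathZ r n) : (x * y).c = fun i => x.c i + y.c (x.pi⁻¹ i) := rfl
@[simp] lemma mul_pi (x y : WreathZ r n) : (x * y).pi = x.pi * y.pi := rfl
@[simp] lemma one_c : (1 : WreathZ r n).c = 0 := rfl
@[simp] lemma one_pi : (1 : WreathZ r n).pi = 1 := rfl
@[simp] lemma inv_c (x : WreathZ r n) : x⁻¹.c = fun i => -x.c (x.pi i) := rfl
@[simp] lemma inv_pi (x : WreathZ r n) : x⁻¹.pi = x.pi⁻¹ := rfl

instance : Group (WreathZ r n) where
  mul_assoc x y z := by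
    ext i
    · simp [add_assoc, Equiv.Perm.mul_apply]
    · simp [mul_assoc]
  one_mul x := by ext i <;> simp
  mul_one x := by ext i <;> simp
  inv_mul_cancel x := by
    ext i
    · simp [Equiv.Perm.mul_apply]
    · simp

end WreathZ

/-- The complex reflection group `G(r,p,n)`: the subgroup of `G(r,n)` of elements whose
color sum is `0` modulo `p`. -/
def Grpn (r p n : ℕ) (h : p ∣ r) : Subgroup (WreathZ r n) where
  carrier := {x | ZMod.castHom h (ZMod p) (∑ i, x.c i) = 0}
  one_mem' := by simp
  mul_mem' := by
    intro a b ha hb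
    simp only [Set.mem_setOf_eq, WreathZ.mul_c] at *
    rw [Finset.sum_add_distrib, map_add, ha, Equiv.sum_comp a.pi⁻¹ b.c, hb, add_zero]
  inv_mem' := by
    intro a ha
    simp only [Set.mem_setOf_eq, WreathZ.inv_c] at *
    rw [show (∑ x : Fin n, -a.c (a.pi x)) = -∑ x : Fin n, a.c (a.pi x) by
      rw [Finset.sum_neg_distrib]]
    rw [map_neg, Equiv.sum_comp a.pi (fun i => a.c i), ha, neg_zero]

/-!
Write `ord(tᵢ) = eᵢ p²` and `uᵢ = tᵢ ^ (eᵢ p)`. Since `p² ∤ p!`, any `x` with `x ^ p² = 1` has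
`x ^ p` in the base group with all colours in `pℤ/p²ℤ`, a subgroup `B` of order at most `p ^ p`;
for `x ∈ G(p², p, p)` the colour sum of `x ^ p` moreover vanishes. So all products
`u₀ ^ j₀ ⋯ u_{p-1} ^ j_{p-1}` with `jᵢ < p` lie in the proper subgroup of `B` of colour sum zero,
yet by uniqueness of presentations these `p ^ p` products are pairwise distinct.
-/

section PerfectBasis

variable {G : Type*} [Group G] {n : ℕ}

lemma prodPow_pow (a : Fin n → G) (d k : Fin n → ℕ) :
    prodPow (fun i => a i ^ d i) k = prodPow a fun i => d i * k i := by
  simp only [prodPow, pow_mul]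

lemma Subgroup.coe_prodPow {H : Subgroup G} (a : Fin n → H) (k : Fin n → ℕ) :
    ((prodPow a k : H) : G) = prodPow (fun i => (a i : G)) k := by
  simp [prodPow, List.map_ofFn, Function.comp_def]

lemma Subgroup.prodPow_mem {H : Subgroup G} {a : Fin n → G} (ha : ∀ i, a i ∈ H)
    (k : Fin n → ℕ) : prodPow a k ∈ H :=
  H.list_prod_mem <| List.forall_mem_ofFn_iff.mpr fun i => H.pow_mem (ha i) _

lemma IsUniqueProd.injective {a : Fin n → G} {m : Fin n → ℕ} (h : IsUniqueProd a m) :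
    Function.Injective fun k : (i : Fin n) → Fin (m i) => prodPow a fun i => (k i : ℕ) := by
  intro k k' hk
  obtain ⟨_, _, huniq⟩ := h (prodPow a fun i => (k i : ℕ))
  exact (huniq k rfl).trans (huniq k' hk).symm

lemma IsPerfectBasis.orderOf_pos {a : Fin n → G} (h : IsPerfectBasis a) (i : Fin n) :
    0 < orderOf (a i) :=
  ((h 1).exists.choose i).pos

lemma IsPerfectBasis.injective_prodPow_pow {a : Fin n → G} (h : IsPerfectBasis a)
    {d b : Fin n → ℕ} (hab : ∀ i, orderOf (a i) = d i * b i) :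
    Function.Injective fun k : (i : Fin n) → Fin (b i) =>
      prodPow (fun i => a i ^ d i) fun i => (k i : ℕ) := by
  have hd : ∀ i, 0 < d i := fun i =>
    Nat.pos_of_mul_pos_right (hab i ▸ h.orderOf_pos i)
  let scale (k : (i : Fin n) → Fin (b i)) (i : Fin n) : Fin (orderOf (a i)) :=
    ⟨d i * k i, hab i ▸ Nat.mul_lt_mul_of_pos_left (k i).isLt (hd i)⟩
  have hscale : Function.Injective scale := fun k k' hk => funext fun i =>
    Fin.ext <| Nat.eq_of_mul_eq_mul_left (hd i) (congrArg Fin.val (congrFun hk i))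
  intro k k' hk
  simp only [prodPow_pow] at hk
  exact hscale (IsUniqueProd.injective h hk)

end PerfectBasis

lemma Subgroup.card_lt_card_of_lt {G : Type*} [Group G] {H K : Subgroup G} [Finite K]
    (h : H < K) : Nat.card H < Nat.card K :=
  lt_of_not_ge fun hcard => h.ne (Subgroup.eq_of_le_of_card_ge h.le hcard)

lemma Equiv.Perm.pow_eq_one_of_pow_sq_eq_one {p : ℕ} (hp : p.Prime) {σ : Equiv.Perm (Fin p)}
    (hσ : σ ^ p ^ 2 = 1) : σ ^ p = 1 := by
  rw [← orderOf_dvd_iff_pow_eq_one]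
  obtain ⟨k, hk, hσk⟩ := (Nat.dvd_prime_pow hp).mp (orderOf_dvd_of_pow_eq_one hσ)
  have hσp : orderOf σ ∣ p.factorial := by
    simpa only [Fintype.card_perm, Fintype.card_fin] using orderOf_dvd_card (x := σ)
  interval_cases k
  · simp [hσk]
  · simp [hσk]
  · rw [hσk, ← Nat.mul_factorial_pred hp.ne_zero, sq,
      Nat.mul_dvd_mul_iff_left hp.pos, hp.dvd_factorial] at hσp
    have := hp.pos
    omega

namespace WreathZ

variable {r n : ℕ}

instance [NeZero r] : Finite (WreathZ r n) :=
  Finite.of_injective (fun x => (x.c, x.pi)) fun _ _ h => WreathZ.ext (congrArg Prod.fst h)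
    (congrArg Prod.snd h)

def piHom : WreathZ r n →* Equiv.Perm (Fin n) where
  toFun := pi
  map_one' := rfl
  map_mul' _ _ := rfl

lemma pow_pi (x : WreathZ r n) (k : ℕ) : (x ^ k).pi = x.pi ^ k :=
  map_pow piHom x k

lemma pow_c_of_pi_eq_one {x : WreathZ r n} (hx : x.pi = 1) (k : ℕ) : (x ^ k).c = k • x.c := by
  induction k with
  | zero => simp
  | succ k ih =>
    ext i
    simp [pow_succ, ih, pow_pi, hx, add_one_mul]

def colorSum : WreathZ r n →* Multiplicative (ZMod r) where
  toFun x := Multiplicative.ofAdd (∑ i, x.c i)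
  map_one' := by simp
  map_mul' x y := by
    simp only [mul_c, Finset.sum_add_distrib, Equiv.sum_comp x.pi⁻¹ y.c, ofAdd_add]

lemma colorSum_apply (x : WreathZ r n) : colorSum x = Multiplicative.ofAdd (∑ i, x.c i) := rfl

lemma mem_ker_colorSum {x : WreathZ r n} : x ∈ colorSum.ker ↔ ∑ i, x.c i = 0 :=
  MonoidHom.mem_ker.trans ofAdd_eq_one

def baseTorsion (m : ℕ) : Subgroup (WreathZ r n) where
  carrier := {x | x.pi = 1 ∧ ∀ i, m • x.c i = 0}
  one_mem' := ⟨rfl, by simp⟩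
  mul_mem' := by
    rintro x y ⟨hx, hxc⟩ ⟨hy, hyc⟩
    exact ⟨by simp [hx, hy], fun i => by simp [smul_add, hxc, hyc]⟩
  inv_mem' := by
    rintro x ⟨hx, hxc⟩
    exact ⟨by simp [hx], fun i => by simp [hxc]⟩

lemma card_baseTorsion_le [NeZero r] [IsAddCyclic (ZMod r)] {m : ℕ} (hm : 0 < m) :
    Nat.card (baseTorsion m : Subgroup (WreathZ r n)) ≤ m ^ n := by
  classical
  let T := {z : ZMod r // m • z = 0}
  let colors (x : (baseTorsion m : Subgroup (WreathZ r n))) (i : Fin n) : T :=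
    ⟨(x : WreathZ r n).c i, x.2.2 i⟩
  have hcolors : Function.Injective colors := fun x y h => Subtype.ext <| WreathZ.ext
    (funext fun i => congrArg Subtype.val (congrFun h i)) (x.2.1.trans y.2.1.symm)
  calc Nat.card (baseTorsion m : Subgroup (WreathZ r n))
      ≤ Nat.card (Fin n → T) := Nat.card_le_card_of_injective colors hcolors
    _ = Nat.card T ^ n := by simp
    _ ≤ m ^ n := by
      gcongr
      rw [Nat.card_eq_fintype_card, Fintype.card_subtype]
      exact IsAddCyclic.card_nsmul_eq_zero_le hm

section PrimeSquare

variable {p : ℕ}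

lemma nsmul_eq_zero_of_castHom_eq_zero [NeZero p] {z : ZMod (p ^ 2)}
    (hz : ZMod.castHom (dvd_pow_self p two_ne_zero) (ZMod p) z = 0) : p • z = 0 := by
  rw [← ZMod.natCast_zmod_val z, map_natCast, ZMod.natCast_eq_zero_iff] at hz
  obtain ⟨w, hw⟩ := hz
  rw [← ZMod.natCast_zmod_val z, hw, nsmul_eq_mul, ← Nat.cast_mul, ← mul_assoc, ← sq,
    Nat.cast_mul, ZMod.natCast_self, zero_mul]

lemma pow_mem_ker_colorSum [NeZero p] {x : WreathZ (p ^ 2) n}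
    (hx : x ∈ Grpn (p ^ 2) p n (dvd_pow_self p two_ne_zero)) : x ^ p ∈ colorSum.ker := by
  rw [MonoidHom.mem_ker, map_pow, colorSum_apply, ← ofAdd_nsmul,
    nsmul_eq_zero_of_castHom_eq_zero hx, ofAdd_zero]

lemma pow_mem_baseTorsion (hp : p.Prime) {x : WreathZ (p ^ 2) p} (hx : x ^ p ^ 2 = 1) :
    x ^ p ∈ baseTorsion p := by
  have hpi : (x ^ p).pi = 1 := by
    rw [pow_pi]
    exact Equiv.Perm.pow_eq_one_of_pow_sq_eq_one hp (by rw [← pow_pi, hx, one_pi])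
  refine ⟨hpi, fun i => ?_⟩
  rw [← Pi.smul_apply, ← pow_c_of_pi_eq_one hpi, ← pow_mul, ← sq, hx, one_c, Pi.zero_apply]

lemma baseTorsion_inf_ker_colorSum_lt [NeZero n] (hp : 1 < p) :
    baseTorsion p ⊓ colorSum.ker < (baseTorsion p : Subgroup (WreathZ (p ^ 2) n)) := by
  let w : WreathZ (p ^ 2) n := ⟨Pi.single 0 p, 1⟩
  have hw : w ∈ baseTorsion p := by
    refine ⟨rfl, fun i => ?_⟩
    dsimp only [w]
    rcases eq_or_ne i 0 with rfl | hi
    · rw [Pi.single_eq_same, nsmul_eq_mul, ← Nat.cast_mul, ← sq, ZMod.natCast_self]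
    · rw [Pi.single_eq_of_ne hi, smul_zero]
  have hw' : w ∉ colorSum.ker := by
    rw [mem_ker_colorSum]
    dsimp only [w]
    rw [Finset.sum_pi_single', if_pos (Finset.mem_univ _),
      ZMod.natCast_eq_zero_iff]
    exact Nat.not_dvd_of_pos_of_lt (by omega) (by nlinarith)
  exact lt_of_le_of_ne inf_le_left fun h => hw' (h ▸ hw).2

end PrimeSquare

end WreathZ

open WreathZ in
/-- For any prime `p`, the complex reflection group `G(p², p, p)` has
no perfect Hilbertian basis: there is no perfect basis `(t_0, t_1, …, t_{p-1})` of
`G(p², p, p)` whose multiset of element orders is `{p², p², 2p², 3p², …, (p-1)p²}`. -/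
theorem no_perfect_hilbertian_basis (p : ℕ) (hp : p.Prime) :
    ¬ ∃ t : Fin p → (Grpn (p ^ 2) p p (dvd_pow_self p two_ne_zero)),
        IsPerfectBasis t ∧
        Multiset.map (fun i => orderOf (t i)) Finset.univ.val
          = p ^ 2 ::ₘ Multiset.map (fun i => (i + 1) * p ^ 2) (Multiset.range (p - 1)) := by
  rintro ⟨t, ht, horders⟩
  have : NeZero p := ⟨hp.ne_zero⟩
  have hdvd : ∀ i, p ^ 2 ∣ orderOf (t i) := by
    have : ∀ m ∈ p ^ 2 ::ₘ Multiset.map (fun i => (i + 1) * p ^ 2) (Multiset.range (p - 1)),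
        p ^ 2 ∣ m := by simp
    simpa [← horders] using this
  choose e he using hdvd
  let x (i : Fin p) := t i ^ (e i * p)
  have hx : Function.Injective fun j : Fin p → Fin p => prodPow x fun i => (j i : ℕ) :=
    ht.injective_prodPow_pow (fun i => by rw [he i]; ring)
  have hmem (i : Fin p) : (x i).1 ∈ baseTorsion p ⊓ colorSum.ker := by
    have hpow : (t i ^ e i) ^ p ^ 2 = 1 := by rw [← pow_mul, mul_comm, ← he i, pow_orderOf_eq_one]
    rw [show x i = (t i ^ e i) ^ p from pow_mul _ _ _, Subgroup.coe_pow]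
    exact ⟨pow_mem_baseTorsion hp (by rw [← Subgroup.coe_pow, hpow, Subgroup.coe_one]),
      pow_mem_ker_colorSum (t i ^ e i).2⟩
  let Θ (j : Fin p → Fin p) : (baseTorsion p ⊓ colorSum.ker : Subgroup (WreathZ (p ^ 2) p)) :=
    ⟨(prodPow x fun i => (j i : ℕ)).1, by
      rw [Subgroup.coe_prodPow]; exact Subgroup.prodPow_mem hmem _⟩
  have hΘ : Function.Injective Θ := fun j j' h => hx <| Subtype.ext <| by
    simpa [Θ] using congrArg Subtype.val h
  have hcard : p ^ p < p ^ p := calc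
    p ^ p = Nat.card (Fin p → Fin p) := by simp
    _ ≤ Nat.card (baseTorsion p ⊓ colorSum.ker : Subgroup (WreathZ (p ^ 2) p)) :=
      Nat.card_le_card_of_injective Θ hΘ
    _ < Nat.card (baseTorsion p : Subgroup (WreathZ (p ^ 2) p)) :=
      Subgroup.card_lt_card_of_lt (baseTorsion_inf_ker_colorSum_lt hp.one_lt)
    _ ≤ p ^ p := card_baseTorsion_le hp.pos
  exact lt_irrefl _ hcard
end
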